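/- arXiv:2111.02166 — 2 statements merged into one kernel-verified Lean document; each statement's English description precedes it below -/
import Mathlib

section
/- Let E be an effect algebra with compression base (J_p)_{p∈P} having the b-comparability property, and let a, b ∈ E with aCb. Then: (i) the positive part (b−a)_+ is contained in every C-block containing a and b; (ii) for every q ∈ P_≤(a,b), (a−b)_+ = J_{q'}(a) ⊖ J_{q'}(b); (iii) if r ∈ PC(a) ∩ PC(b) satisfies J_r(a) ≤ J_r(b) and J_{r'}(b) ≤ J_{r'}(a), then J_r(b) ⊖ J_r(a) = (b−a)_+; (iv) if the projection cover (b−a)_+° exists, then (b−a)_+° ∈ P_≤(a,b) and it is the smallest projection r ∈ PC(a) ∩ PC(b) such that J_r(a) ≤ J_r(b) and J_{r'}(b) ≤ J_{r'}(a). -/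
/- Common definitions: effect algebras, compression bases, spectrality -/

attribute [local instance 0] Classical.propDecidable

universe u

structure EffectAlgebra (E : Type u) where
  padd : E → E → Option E
  zero : E
  one : E
  comm : ∀ a b, padd a b = padd b a
  assoc : ∀ a b c ab abc, padd a b = some ab → padd ab c = some abc →
      ∃ bc, padd b c = some bc ∧ padd a bc = some abc
  orth_exists : ∀ a, ∃ x, padd a x = some one
  orth_unique : ∀ a x y, padd a x = some one → padd a y = some one → x = y
  add_one : ∀ a b, padd a one = some b → a = zero

namespace EffectAlgebra

variable {E : Type u} (EA : EffectAlgebra E)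

/-- `a ⊥ b` and `a ⊕ b = c`. -/
def le (a b : E) : Prop := ∃ c, EA.padd a c = some b

/-- the orthosupplement `a'`. -/
noncomputable def compl (a : E) : E := (EA.orth_exists a).choose

/-- `b ⊖ a` (the element `c` with `a ⊕ c = b`, when it exists). -/
noncomputable def osub (b a : E) : E :=
  if h : ∃ c, EA.padd a c = some b then h.choose else EA.zero

/-- the value of `a ⊕ b` (defaulting to `0` when undefined). -/
noncomputable def oplusD (a b : E) : E := (EA.padd a b).getD EA.zero

def IsSharp (a : E) : Prop := ∀ x, EA.le x a → EA.le x (EA.compl a) → x = EA.zero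

/-- sub-effect algebra. -/
def SubEA (P : Set E) : Prop :=
  EA.zero ∈ P ∧ EA.one ∈ P ∧ (∀ a ∈ P, EA.compl a ∈ P) ∧
    ∀ a ∈ P, ∀ b ∈ P, ∀ c, EA.padd a b = some c → c ∈ P

/-- Mackey compatibility: `a = a₁ ⊕ c`, `b = b₁ ⊕ c` with `a₁ ⊕ b₁ ⊕ c` defined. -/
def Mackey (a b : E) : Prop :=
  ∃ a1 b1 c d e, EA.padd a1 b1 = some d ∧ EA.padd d c = some e ∧
    EA.padd a1 c = some a ∧ EA.padd b1 c = some b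

def Additive (J : E → E) : Prop :=
  ∀ a b c, EA.padd a b = some c → EA.padd (J a) (J b) = some (J c)

def Retraction (J : E → E) : Prop :=
  EA.Additive J ∧ ∀ a, EA.le a (J EA.one) → J a = a

def Compression (J : E → E) : Prop :=
  EA.Retraction J ∧ ∀ a, (J a = EA.zero ↔ EA.le a (EA.compl (J EA.one)))

/-- `I` is a supplement of `J`: `Ker J = ran I` and `Ker I = ran J`. -/
def Supplement (I J : E → E) : Prop :=
  (∀ a, J a = EA.zero ↔ ∃ b, I b = a) ∧ (∀ a, I a = EA.zero ↔ ∃ b, J b = a)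

/-- the `n`-fold sum `n·a`, when defined. -/
def nsmulE : ℕ → E → Option E
  | 0, _ => some EA.zero
  | n + 1, a => (nsmulE n a).bind fun b => EA.padd a b

def ArchimedeanEA : Prop :=
  ∀ a : E, (∀ n : ℕ, ∃ b, EA.nsmulE n a = some b) → a = EA.zero

/-- a state on an effect algebra. -/
def IsState (s : E → ℝ) : Prop :=
  s EA.one = 1 ∧ (∀ a, 0 ≤ s a ∧ s a ≤ 1) ∧
    ∀ a b c, EA.padd a b = some c → s c = s a + s b

noncomputable def partialSum (f : ℕ → E) : ℕ → E
  | 0 => EA.zero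
  | n + 1 => EA.oplusD (partialSum f n) (f n)

/-- σ-additivity of a state: if all partial sums of an orthogonal sequence are defined
and the orthosum (= supremum of the partial sums) exists, the state is countably additive. -/
def SigmaAdditive (s : E → ℝ) : Prop :=
  ∀ f : ℕ → E, ∀ b : E,
    (∀ n, ∃ c, EA.padd (EA.partialSum f n) (f n) = some c) →
    (∀ n, EA.le (EA.partialSum f n) b) →
    (∀ c, (∀ n, EA.le (EA.partialSum f n) c) → EA.le b c) →
    Filter.Tendsto (fun n => ∑ i ∈ Finset.range n, s (f i)) Filter.atTop (nhds (s b))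

/-- A compression base: a family of compressions indexed by a sub-effect algebra `P`
such that each `p ∈ P` is the focus of `J p`, and Mackey compatible projections
compose to a projection. -/
structure CompressionBase {E : Type u} (EA : EffectAlgebra E) where
  P : Set E
  J : E → E → E
  sub : EA.SubEA P
  compr : ∀ p ∈ P, EA.Compression (J p)
  focus : ∀ p ∈ P, J p EA.one = p
  mackey : ∀ p ∈ P, ∀ q ∈ P, EA.Mackey p q → ∃ r ∈ P, J p ∘ J q = J r

variable (CB : CompressionBase EA)

/-- `a ∈ C(p)`:  `a = J_p(a) ⊕ J_{p'}(a)`. -/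
def inC (a p : E) : Prop :=
  EA.padd (CB.J p a) (CB.J (EA.compl p) a) = some a

/-- `PC(a) = {p ∈ P : a ∈ C(p)}`. -/
def PC (a : E) : Set E := {p | p ∈ CB.P ∧ inC EA CB a p}

/-- the bicommutant `P(a)`. -/
def bicomm (a : E) : Set E :=
  {p | p ∈ PC EA CB a ∧ ∀ q ∈ PC EA CB a, inC EA CB p q}

/-- `PC(A)` for a set `A ⊆ E`. -/
def PCset (A : Set E) : Set E := {p | p ∈ CB.P ∧ ∀ a ∈ A, inC EA CB a p}

/-- `P(Q) = PC(PC(Q) ∪ Q)`. -/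
def Pset (Q : Set E) : Set E := PCset EA CB (PCset EA CB Q ∪ Q)

/-- `P_≤(e,f)`. -/
def Ple (e f : E) : Set E :=
  {p | p ∈ Pset EA CB {e, f} ∧ EA.le (CB.J p e) (CB.J p f) ∧
    EA.le (CB.J (EA.compl p) f) (CB.J (EA.compl p) e)}

/-- a Boolean subalgebra of `P`: a sub-effect algebra of `E` contained in `P`
whose elements are pairwise Mackey compatible, with witnesses inside. -/
def BooleanSub (B : Set E) : Prop :=
  B ⊆ CB.P ∧ EA.SubEA B ∧
    ∀ p ∈ B, ∀ q ∈ B, ∃ p1 ∈ B, ∃ q1 ∈ B, ∃ c ∈ B, ∃ d e,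
      EA.padd p1 q1 = some d ∧ EA.padd d c = some e ∧
      EA.padd p1 c = some p ∧ EA.padd q1 c = some q

/-- `a` is a b-element with associated Boolean subalgebra `B`. -/
def IsBElementWith (a : E) (B : Set E) : Prop :=
  BooleanSub EA CB B ∧ ∀ p ∈ CB.P, (inC EA CB a p ↔ ∀ b ∈ B, inC EA CB b p)

def IsBElement (a : E) : Prop := ∃ B, IsBElementWith EA CB a B

def BProperty : Prop := ∀ a : E, IsBElement EA CB a

/-- commuting of b-elements: `e C f` iff `P(e) ↔ P(f)`. -/
def CommuteEl (e f : E) : Prop :=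
  ∀ p ∈ bicomm EA CB e, ∀ q ∈ bicomm EA CB f, EA.Mackey p q

def BComparability : Prop :=
  BProperty EA CB ∧ ∀ e f : E, CommuteEl EA CB e f → (Ple EA CB e f).Nonempty

def IsProjCover (a p : E) : Prop :=
  p ∈ CB.P ∧ ∀ q ∈ CB.P, (EA.le a q ↔ EA.le p q)

def ProjCoverProp : Prop := ∀ a : E, ∃ p, IsProjCover EA CB a p

def Spectral : Prop := ProjCoverProp EA CB ∧ BComparability EA CB

/-- a block of `P`: a maximal set of pairwise Mackey compatible projections. -/
def IsBlock (B : Set E) : Prop :=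
  B ⊆ CB.P ∧ (∀ p ∈ B, ∀ q ∈ B, EA.Mackey p q) ∧
    ∀ B' : Set E, B' ⊆ CB.P → (∀ p ∈ B', ∀ q ∈ B', EA.Mackey p q) → B ⊆ B' → B' = B

/-- the C-block `C(B)`. -/
def Cblock (B : Set E) : Set E := {a | ∀ p ∈ B, inC EA CB a p}

/-- `(f − e)_+` (the positive part, defined when `P_≤(e,f)` is nonempty). -/
noncomputable def posPart (e f : E) : E :=
  if h : (Ple EA CB e f).Nonempty then
    EA.osub (CB.J h.some f) (CB.J h.some e)
  else EA.zero

noncomputable def projCover (a : E) : E :=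
  if h : ∃ p, IsProjCover EA CB a p then h.choose else EA.zero

def IsMeetP (p q m : E) : Prop :=
  m ∈ CB.P ∧ EA.le m p ∧ EA.le m q ∧ ∀ s ∈ CB.P, EA.le s p → EA.le s q → EA.le s m

/-- `p ∧ q` in `P`. -/
noncomputable def pmeet (p q : E) : E :=
  if h : ∃ m, IsMeetP EA CB p q m then h.choose else EA.zero

/-- infimum of a set of projections in `P`. -/
def IsInfP (S : Set E) (m : E) : Prop :=
  m ∈ CB.P ∧ (∀ s ∈ S, EA.le m s) ∧
    ∀ t ∈ CB.P, (∀ s ∈ S, EA.le t s) → EA.le t m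

/-! Relative (to a projection `q`, i.e. computed in the interval `[0,q]`) notions. -/

def Pq (q : E) : Set E := {p | p ∈ CB.P ∧ EA.le p q}

def inCq (q a p : E) : Prop :=
  EA.padd (CB.J p a) (CB.J (EA.osub q p) a) = some a

def PCq (q a : E) : Set E := {p | p ∈ Pq EA CB q ∧ inCq EA CB q a p}

def bicommq (q a : E) : Set E :=
  {p | p ∈ PCq EA CB q a ∧ ∀ r ∈ PCq EA CB q a, inCq EA CB q p r}

def PCsetq (q : E) (A : Set E) : Set E :=
  {p | p ∈ Pq EA CB q ∧ ∀ a ∈ A, inCq EA CB q a p}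

def Psetq (q : E) (Q : Set E) : Set E := PCsetq EA CB q (PCsetq EA CB q Q ∪ Q)

def Pleq (q e f : E) : Set E :=
  {p | p ∈ Psetq EA CB q {e, f} ∧ EA.le (CB.J p e) (CB.J p f) ∧
    EA.le (CB.J (EA.osub q p) f) (CB.J (EA.osub q p) e)}

noncomputable def posPartq (q e f : E) : E :=
  if h : (Pleq EA CB q e f).Nonempty then
    EA.osub (CB.J h.some f) (CB.J h.some e)
  else EA.zero

def IsProjCoverq (q a p : E) : Prop :=
  p ∈ Pq EA CB q ∧ ∀ s ∈ Pq EA CB q, (EA.le a s ↔ EA.le p s)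

noncomputable def projCoverq (q a : E) : E :=
  if h : ∃ p, IsProjCoverq EA CB q a p then h.choose else EA.zero

def Mackeyq (q a b : E) : Prop :=
  ∃ a1 b1 c d e, EA.padd a1 b1 = some d ∧ EA.padd d c = some e ∧ EA.le e q ∧
    EA.padd a1 c = some a ∧ EA.padd b1 c = some b

def SubEAq (q : E) (F : Set E) : Prop :=
  EA.zero ∈ F ∧ q ∈ F ∧ (∀ x ∈ F, EA.osub q x ∈ F) ∧
    ∀ x ∈ F, ∀ y ∈ F, ∀ z, EA.padd x y = some z → EA.le z q → z ∈ F

def BooleanSubq (q : E) (B : Set E) : Prop :=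
  B ⊆ Pq EA CB q ∧ SubEAq EA q B ∧
    ∀ p ∈ B, ∀ r ∈ B, ∃ p1 ∈ B, ∃ r1 ∈ B, ∃ c ∈ B, ∃ d e,
      EA.padd p1 r1 = some d ∧ EA.padd d c = some e ∧ EA.le e q ∧
      EA.padd p1 c = some p ∧ EA.padd r1 c = some r

def IsBElementq (q a : E) : Prop :=
  ∃ B, BooleanSubq EA CB q B ∧
    ∀ p ∈ Pq EA CB q, (inCq EA CB q a p ↔ ∀ b ∈ B, inCq EA CB q b p)

def BPropertyq (q : E) : Prop := ∀ a : E, EA.le a q → IsBElementq EA CB q a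

def CommuteElq (q e f : E) : Prop :=
  ∀ p ∈ bicommq EA CB q e, ∀ r ∈ bicommq EA CB q f, Mackeyq EA q p r

def BComparabilityq (q : E) : Prop :=
  BPropertyq EA CB q ∧ ∀ e f : E, EA.le e q → EA.le f q →
    CommuteElq EA CB q e f → (Pleq EA CB q e f).Nonempty

/-! The binary spectral resolution. -/

/-- `λ(w) = Σ_j w_j 2^{-j}` (head of the list is the first digit). -/
def lamOf : List Bool → ℚ
  | [] => 0
  | b :: t => ((if b then 1 else 0) + lamOf t) / 2

/-- all binary strings of length `n`, in lexicographic order. -/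
def allStrings : ℕ → List (List Bool)
  | 0 => [[]]
  | n + 1 => (allStrings n).flatMap fun w => [w ++ [false], w ++ [true]]

noncomputable def listSum (l : List E) : E :=
  l.foldl (fun acc x => EA.oplusD acc x) EA.zero

/-- the families `(u_w, c_w)`; the binary string is given in reversed order
(head of the list is the last digit). -/
noncomputable def ucAux (a : E) : List Bool → E × E
  | [] => (projCover EA CB a, a)
  | bit :: t =>
      let p := ucAux a t
      let q := p.1
      let cw := p.2
      let cw' := EA.osub q cw
      let d := posPartq EA CB q cw' cw
      let u0 := pmeet EA CB (EA.osub q (projCoverq EA CB q d)) q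
      if bit then (pmeet EA CB q (EA.compl u0), d)
      else (u0, EA.oplusD (CB.J u0 cw) (CB.J u0 cw))

noncomputable def uw (a : E) (w : List Bool) : E := (ucAux EA CB a w.reverse).1

noncomputable def cw (a : E) (w : List Bool) : E := (ucAux EA CB a w.reverse).2

/-- the binary spectral projection `p_{a,λ(w1)}`. -/
noncomputable def pbin (a : E) (w : List Bool) : E :=
  listSum EA (EA.compl (projCover EA CB a) ::
    (((allStrings (w.length + 1)).filter
        fun v => lamOf v ≤ lamOf (w ++ [false])).map (uw EA CB a)))

def Dyadic01 (x : ℚ) : Prop := ∃ n k : ℕ, (k : ℚ) ≤ 2 ^ n ∧ x = (k : ℚ) / 2 ^ n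

/-- the binary spectral resolution `p_{a,λ}`, for dyadic rationals `λ ∈ [0,1]`. -/
noncomputable def pdyad (a : E) (x : ℚ) : E :=
  if x ≤ 0 then EA.compl (projCover EA CB a)
  else if 1 ≤ x then EA.one
  else if h : ∃ w : List Bool, lamOf (w ++ [true]) = x then pbin EA CB a h.choose
  else EA.zero

/-- the rational spectral resolution `p_{a,λ} = ⋀_{μ > λ, μ dyadic} p_{a,μ}`. -/
noncomputable def ratRes (a : E) (x : ℚ) : E :=
  if h : ∃ m, IsInfP EA CB {y | ∃ μ, Dyadic01 μ ∧ x < μ ∧ y = pdyad EA CB a μ} m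
  then h.choose else EA.zero

/-- the partial maps `f_0(b) = 2b`, `f_1(b) = (2b')'` computed in `[0,uu]`. -/
noncomputable def fstep (uu b : E) (bit : Bool) : Option E :=
  if bit then
    (if EA.le (EA.osub uu b) b
      then some (EA.osub uu (EA.oplusD (EA.osub uu b) (EA.osub uu b))) else none)
  else
    (if EA.le b (EA.osub uu b) then some (EA.oplusD b b) else none)

/-- `f_w = f_{w_n} ∘ ⋯ ∘ f_{w_1}`, computed in `[0,uu]`, as a partial map. -/
noncomputable def fword (uu : E) (w : List Bool) (b : E) : Option E :=
  w.foldl (fun ob bit => ob.bind fun x => fstep EA uu x bit) (some b)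

end EffectAlgebra

namespace EffectAlgebra

section Infra

variable {E : Type u} {EA : EffectAlgebra E}

theorem padd_compl' (EA : EffectAlgebra E) (a : E) : EA.padd a (EA.compl a) = some EA.one :=
  (EA.orth_exists a).choose_spec

theorem compl_eq {a x : E} (h : EA.padd a x = some EA.one) : EA.compl a = x :=
  EA.orth_unique a _ x (padd_compl' EA a) h

theorem compl_compl' (EA : EffectAlgebra E) (a : E) : EA.compl (EA.compl a) = a :=
  compl_eq (by rw [EA.comm]; exact padd_compl' EA a)

theorem one_add_zero (EA : EffectAlgebra E) : EA.padd EA.one EA.zero = some EA.one := by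
  obtain ⟨x, hx⟩ := EA.orth_exists EA.one
  have : x = EA.zero := EA.add_one x EA.one (by rw [EA.comm]; exact hx)
  rwa [this] at hx

theorem padd_zero (EA : EffectAlgebra E) (a : E) : EA.padd a EA.zero = some a := by
  have h1 : EA.padd (EA.compl a) (EA.compl (EA.compl a)) = some EA.one := padd_compl' EA _
  rw [compl_compl'] at h1
  obtain ⟨bc, hbc, habc⟩ := EA.assoc (EA.compl a) a EA.zero EA.one EA.one h1 (one_add_zero EA)
  have : bc = a := by
    have h2 := compl_eq habc
    rw [compl_compl'] at h2; exact h2.symm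
  rwa [this] at hbc

theorem zero_padd (EA : EffectAlgebra E) (a : E) : EA.padd EA.zero a = some a := by
  rw [EA.comm]; exact padd_zero EA a

theorem cancel {a b c d : E} (h1 : EA.padd a b = some d) (h2 : EA.padd a c = some d) :
    b = c := by
  obtain ⟨e, he, hae⟩ := EA.assoc a b (EA.compl d) d EA.one h1 (padd_compl' EA d)
  obtain ⟨f, hf, haf⟩ := EA.assoc a c (EA.compl d) d EA.one h2 (padd_compl' EA d)
  have hef : e = f := (compl_eq hae).symm.trans (compl_eq haf)
  subst hef
  obtain ⟨g, hg, hbg⟩ := EA.assoc b (EA.compl d) a e EA.one he (by rw [EA.comm]; exact hae)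
  obtain ⟨g', hg', hcg'⟩ := EA.assoc c (EA.compl d) a e EA.one hf (by rw [EA.comm]; exact hae)
  have hgg : g = g' := by rw [hg] at hg'; exact Option.some_inj.mp hg'
  rw [← hgg] at hcg'
  have hb := compl_eq hbg
  have hc := compl_eq hcg'
  calc b = EA.compl (EA.compl b) := (compl_compl' EA b).symm
    _ = EA.compl g := by rw [hb]
    _ = EA.compl (EA.compl c) := by rw [hc]
    _ = c := compl_compl' EA c

theorem cancel_right {a b c d : E} (h1 : EA.padd a c = some d) (h2 : EA.padd b c = some d) :
    a = b := by
  rw [EA.comm] at h1 h2; exact cancel h1 h2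

theorem assoc' {a b c bc abc : E} (h1 : EA.padd b c = some bc) (h2 : EA.padd a bc = some abc) :
    ∃ ab, EA.padd a b = some ab ∧ EA.padd ab c = some abc := by
  obtain ⟨ca, hca, hbca⟩ := EA.assoc b c a bc abc h1 (by rw [EA.comm]; exact h2)
  obtain ⟨ab, hab, hcab⟩ := EA.assoc c a b ca abc hca (by rw [EA.comm]; exact hbca)
  exact ⟨ab, hab, by rw [EA.comm]; exact hcab⟩

theorem le_refl' (EA : EffectAlgebra E) (a : E) : EA.le a a := ⟨EA.zero, padd_zero EA a⟩

theorem le_trans' {a b c : E} (h1 : EA.le a b) (h2 : EA.le b c) : EA.le a c := by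
  obtain ⟨u, hu⟩ := h1; obtain ⟨v, hv⟩ := h2
  obtain ⟨w, _, hw⟩ := EA.assoc a u v b c hu hv
  exact ⟨w, hw⟩

theorem le_one' (EA : EffectAlgebra E) (a : E) : EA.le a EA.one := ⟨EA.compl a, padd_compl' EA a⟩

theorem zero_le' (EA : EffectAlgebra E) (a : E) : EA.le EA.zero a := ⟨a, zero_padd EA a⟩

theorem eq_zero_of_le_zero {a : E} (h : EA.le a EA.zero) : a = EA.zero := by
  obtain ⟨c, hc⟩ := h
  obtain ⟨e, he, _⟩ := EA.assoc a c EA.one EA.zero EA.one hc (zero_padd EA EA.one)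
  have hc0 : c = EA.zero := EA.add_one c e he
  rw [hc0, padd_zero] at hc
  exact Option.some_inj.mp hc

theorem eq_of_padd_self {a w : E} (h : EA.padd a w = some a) : w = EA.zero := by
  obtain ⟨bc, hbc, hw1⟩ := EA.assoc w a (EA.compl a) a EA.one (by rw [EA.comm]; exact h)
    (padd_compl' EA a)
  have : bc = EA.one := by
    rw [padd_compl' EA a] at hbc; exact (Option.some_inj.mp hbc).symm
  rw [this] at hw1
  exact EA.add_one w EA.one hw1

theorem le_antisymm' {a b : E} (h1 : EA.le a b) (h2 : EA.le b a) : a = b := by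
  obtain ⟨u, hu⟩ := h1; obtain ⟨v, hv⟩ := h2
  obtain ⟨w, hw, haw⟩ := EA.assoc a u v b a hu hv
  have hw0 : w = EA.zero := eq_of_padd_self haw
  rw [hw0] at hw
  have hu0 : u = EA.zero := eq_zero_of_le_zero ⟨v, hw⟩
  rw [hu0, padd_zero] at hu
  exact Option.some_inj.mp hu

theorem padd_defined_iff {a b : E} : (∃ c, EA.padd a b = some c) ↔ EA.le b (EA.compl a) := by
  constructor
  · rintro ⟨c, h⟩
    obtain ⟨e, he, hae⟩ := EA.assoc a b (EA.compl c) c EA.one h (padd_compl' EA c)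
    have : EA.compl a = e := compl_eq hae
    exact ⟨EA.compl c, by rw [← this] at he; exact he⟩
  · rintro ⟨u, h⟩
    obtain ⟨e, he, hbe⟩ := EA.assoc b u a (EA.compl a) EA.one h
      (by rw [EA.comm]; exact padd_compl' EA a)
    rw [EA.comm] at he
    obtain ⟨ba, hba, _⟩ := assoc' he hbe
    exact ⟨ba, by rw [EA.comm]; exact hba⟩

theorem le_of_padd_left {a b c : E} (h : EA.padd a b = some c) : EA.le a c := ⟨b, h⟩

theorem le_of_padd_right {a b c : E} (h : EA.padd a b = some c) : EA.le b c :=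
  ⟨a, by rw [EA.comm]; exact h⟩

theorem compl_le_compl {a b : E} (h : EA.le a b) : EA.le (EA.compl b) (EA.compl a) := by
  obtain ⟨c, hc⟩ := h
  obtain ⟨e, he, hae⟩ := EA.assoc a c (EA.compl b) b EA.one hc (padd_compl' EA b)
  have : EA.compl a = e := compl_eq hae
  rw [EA.comm] at he
  exact ⟨c, by rw [this]; exact he⟩

theorem le_compl_swap {a b : E} (h : EA.le a (EA.compl b)) : EA.le b (EA.compl a) := by
  have := compl_le_compl h
  rwa [compl_compl'] at this

theorem padd_of_le_le {u v p : E} (hu : EA.le u p) (hv : EA.le v (EA.compl p)) :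
    ∃ w, EA.padd u v = some w := by
  have h1 : EA.le (EA.compl p) (EA.compl u) := compl_le_compl hu
  exact padd_defined_iff.mpr (le_trans' hv h1)

theorem rearrange4 {x1 y1 x2 y2 u v w : E} (h1 : EA.padd x1 y1 = some u)
    (h2 : EA.padd x2 y2 = some v) (h3 : EA.padd u v = some w) :
    ∃ z t, EA.padd x1 x2 = some z ∧ EA.padd y1 y2 = some t ∧ EA.padd z t = some w := by
  obtain ⟨e, he, hxe⟩ := EA.assoc x1 y1 v u w h1 h3
  obtain ⟨f, hf, hfe⟩ := assoc' h2 he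
  have hf' : EA.padd x2 y1 = some f := by rw [EA.comm]; exact hf
  obtain ⟨g, hg, hgw⟩ := assoc' hfe hxe
  obtain ⟨z, hz, hzg⟩ := assoc' hf' hg
  obtain ⟨t, ht, hzt⟩ := EA.assoc z y1 y2 g w hzg hgw
  exact ⟨z, t, hz, ht, hzt⟩

theorem padd_le_padd {x1 x2 y1 y2 z : E} (h1 : EA.le x1 y1) (h2 : EA.le x2 y2)
    (h : EA.padd y1 y2 = some z) :
    ∃ w, EA.padd x1 x2 = some w ∧ EA.le w z := by
  obtain ⟨u, hu⟩ := h1; obtain ⟨v, hv⟩ := h2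
  obtain ⟨w, t, hw, ht, hwt⟩ := rearrange4 hu hv h
  exact ⟨w, hw, ⟨t, hwt⟩⟩

theorem osub_spec {a b : E} (h : EA.le a b) : EA.padd a (EA.osub b a) = some b := by
  have h' : ∃ c, EA.padd a c = some b := h
  rw [osub, dif_pos h']
  exact h'.choose_spec

theorem osub_eq {a b c : E} (h : EA.padd a c = some b) : EA.osub b a = c :=
  cancel (osub_spec ⟨c, h⟩) h

section Compr

variable {CB : CompressionBase EA}

theorem memP_compl {p : E} (hp : p ∈ CB.P) : EA.compl p ∈ CB.P := CB.sub.2.2.1 p hp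

theorem memP_padd {p q r : E} (hp : p ∈ CB.P) (hq : q ∈ CB.P) (h : EA.padd p q = some r) :
    r ∈ CB.P := CB.sub.2.2.2 p hp q hq r h

theorem J_add {p a b c : E} (hp : p ∈ CB.P) (h : EA.padd a b = some c) :
    EA.padd (CB.J p a) (CB.J p b) = some (CB.J p c) := (CB.compr p hp).1.1 a b c h

theorem J_mono {p a b : E} (hp : p ∈ CB.P) (h : EA.le a b) :
    EA.le (CB.J p a) (CB.J p b) := by
  obtain ⟨c, hc⟩ := h
  exact ⟨CB.J p c, J_add hp hc⟩

theorem J_fix {p a : E} (hp : p ∈ CB.P) (h : EA.le a p) : CB.J p a = a :=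
  (CB.compr p hp).1.2 a (by rw [CB.focus p hp]; exact h)

theorem J_le {p : E} (hp : p ∈ CB.P) (a : E) : EA.le (CB.J p a) p := by
  have := J_mono hp (le_one' EA a)
  rwa [CB.focus p hp] at this

theorem J_zero_iff {p a : E} (hp : p ∈ CB.P) :
    CB.J p a = EA.zero ↔ EA.le a (EA.compl p) := by
  have := (CB.compr p hp).2 a
  rwa [CB.focus p hp] at this

theorem J_zero {p : E} (hp : p ∈ CB.P) : CB.J p EA.zero = EA.zero :=
  (J_zero_iff hp).mpr (zero_le' EA _)

theorem J_idem {p a : E} (hp : p ∈ CB.P) : CB.J p (CB.J p a) = CB.J p a :=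
  J_fix hp (J_le hp a)

theorem J_kill {p a : E} (hp : p ∈ CB.P) (h : EA.le a p) :
    CB.J (EA.compl p) a = EA.zero :=
  (J_zero_iff (memP_compl hp)).mpr (by rw [compl_compl']; exact h)

theorem JJ'_zero {p : E} (hp : p ∈ CB.P) (a : E) :
    CB.J p (CB.J (EA.compl p) a) = EA.zero :=
  (J_zero_iff hp).mpr (J_le (memP_compl hp) a)

theorem inC_iff {p a : E} (hp : p ∈ CB.P) :
    inC EA CB a p ↔ EA.le (CB.J p a) a := by
  constructor
  · intro h; exact ⟨CB.J (EA.compl p) a, h⟩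
  · rintro ⟨e, he⟩
    have h1 := J_add hp he
    rw [J_idem hp] at h1
    have h2 : CB.J p e = EA.zero := eq_of_padd_self h1
    have he' : EA.le e (EA.compl p) := (J_zero_iff hp).mp h2
    have h3 := J_add (memP_compl hp) he
    rw [J_kill hp (J_le hp a), J_fix (memP_compl hp) he', zero_padd] at h3
    have h4 : CB.J (EA.compl p) a = e := (Option.some_inj.mp h3).symm
    unfold inC
    rw [h4]; exact he

theorem inC_of_le {p a : E} (hp : p ∈ CB.P) (h : EA.le a p) : inC EA CB a p := by
  unfold inC
  rw [J_fix hp h, J_kill hp h]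
  exact padd_zero EA a

theorem inC_of_le_compl {p a : E} (hp : p ∈ CB.P) (h : EA.le a (EA.compl p)) :
    inC EA CB a p := by
  unfold inC
  rw [(J_zero_iff hp).mpr h, J_fix (memP_compl hp) h]
  exact zero_padd EA a

theorem inC_one {p : E} (hp : p ∈ CB.P) : inC EA CB EA.one p := by
  unfold inC
  rw [CB.focus p hp, CB.focus (EA.compl p) (memP_compl hp)]
  exact padd_compl' EA p

theorem inC_zero {p : E} (hp : p ∈ CB.P) : inC EA CB EA.zero p :=
  inC_of_le_compl hp (zero_le' EA _)

theorem inC_compl_iff {p a : E} :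
    inC EA CB a (EA.compl p) ↔ inC EA CB a p := by
  unfold inC
  rw [compl_compl']
  constructor <;> intro h <;> (rw [EA.comm]; exact h)

theorem inC_add {p x y z : E} (hp : p ∈ CB.P) (hx : inC EA CB x p) (hy : inC EA CB y p)
    (h : EA.padd x y = some z) : inC EA CB z p := by
  have h1 := J_add hp h
  obtain ⟨z1, t1, hz1, ht1, hzt⟩ := rearrange4 hx hy h
  have h2 := J_add (memP_compl hp) h
  have hz2 : z1 = CB.J p z := by rw [hz1] at h1; exact Option.some_inj.mp h1
  have ht2 : t1 = CB.J (EA.compl p) z := by rw [ht1] at h2; exact Option.some_inj.mp h2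
  unfold inC
  rw [← hz2, ← ht2]
  exact hzt

theorem inC_osub {p x y z : E} (hp : p ∈ CB.P) (h : EA.padd x y = some z)
    (hz : inC EA CB z p) (hy : inC EA CB y p) : inC EA CB x p := by
  have h1 := J_add hp h
  have h2 := J_add (memP_compl hp) h
  obtain ⟨z1, t1, hz1, ht1, hzt⟩ := rearrange4 h1 h2 hz
  have ht2 : t1 = y := by rw [hy] at ht1; exact (Option.some_inj.mp ht1).symm
  rw [ht2] at hzt
  have : z1 = x := cancel_right hzt h
  rw [this] at hz1
  exact hz1

theorem inC_compl_elem {p x : E} (hp : p ∈ CB.P) (hx : inC EA CB x p) :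
    inC EA CB (EA.compl x) p :=
  inC_osub hp (by rw [EA.comm]; exact padd_compl' EA x) (inC_one hp) hx

theorem mackey_of_le {x y : E} (h : EA.le x y) : EA.Mackey x y := by
  refine ⟨EA.zero, EA.osub y x, x, EA.osub y x, y, zero_padd EA _, ?_, zero_padd EA _, ?_⟩
  · rw [EA.comm]; exact osub_spec h
  · rw [EA.comm]; exact osub_spec h

theorem mackey_refl (x : E) : EA.Mackey x x := mackey_of_le (le_refl' EA x)

theorem mackey_symm {x y : E} (h : EA.Mackey x y) : EA.Mackey y x := by
  obtain ⟨a1, b1, c, d, e, h1, h2, h3, h4⟩ := h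
  exact ⟨b1, a1, c, d, e, by rw [EA.comm]; exact h1, h2, h4, h3⟩

theorem mackey_of_inC {p q : E} (hp : p ∈ CB.P) (h : inC EA CB q p) : EA.Mackey p q := by
  set c := CB.J p q with hc
  set b1 := CB.J (EA.compl p) q with hb1
  have hcp : EA.le c p := J_le hp q
  set a1 := EA.osub p c with ha1
  have hca : EA.padd c a1 = some p := osub_spec hcp
  have hb1p : EA.le b1 (EA.compl p) := J_le (memP_compl hp) q
  obtain ⟨d, hd⟩ := padd_of_le_le (le_of_padd_right hca) hb1p
  obtain ⟨e0, he0⟩ := padd_defined_iff.mpr hb1p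
  obtain ⟨d', hd', hcd⟩ := EA.assoc c a1 b1 p e0 hca he0
  have hdd : d' = d := by rw [hd] at hd'; exact (Option.some_inj.mp hd').symm
  rw [hdd] at hd' hcd
  refine ⟨a1, b1, c, d, e0, hd', by rw [EA.comm]; exact hcd, by rw [EA.comm]; exact hca, ?_⟩
  rw [EA.comm]; exact h

theorem J_meet {p q : E} (hp : p ∈ CB.P) (hq : q ∈ CB.P) (h : EA.Mackey p q) :
    CB.J p q = CB.J q p := by
  obtain ⟨a1, b1, c, d0, e, h1, h2, h3, h4⟩ := h
  -- b1 ≤ compl p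
  obtain ⟨q', hq', hae⟩ := EA.assoc a1 b1 c d0 e h1 h2
  have hqq : q' = q := by rw [h4] at hq'; exact (Option.some_inj.mp hq').symm
  rw [hqq] at hae
  obtain ⟨ac, hac, hpb1⟩ := assoc' (by rw [EA.comm]; exact h4) hae
  have hacp : ac = p := by rw [h3] at hac; exact (Option.some_inj.mp hac).symm
  rw [hacp] at hpb1
  have hb1 : EA.le b1 (EA.compl p) := padd_defined_iff.mp ⟨e, hpb1⟩
  have hcp : EA.le c p := le_of_padd_right h3
  have hcq : EA.le c q := le_of_padd_right h4
  -- a1 ≤ compl q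
  obtain ⟨p', hp', hbe⟩ := EA.assoc b1 a1 c d0 e (by rw [EA.comm]; exact h1) h2
  have hpp : p' = p := by rw [h3] at hp'; exact (Option.some_inj.mp hp').symm
  rw [hpp] at hbe
  obtain ⟨bc, hbc, hqa1⟩ := assoc' (by rw [EA.comm]; exact h3) hbe
  have hbcq : bc = q := by rw [h4] at hbc; exact (Option.some_inj.mp hbc).symm
  rw [hbcq] at hqa1
  have ha1 : EA.le a1 (EA.compl q) := padd_defined_iff.mp ⟨e, hqa1⟩
  -- compute
  have e1 := J_add hp h4
  rw [J_fix hp hcp, (J_zero_iff hp).mpr hb1, zero_padd] at e1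
  have e2 := J_add hq h3
  rw [J_fix hq hcq, (J_zero_iff hq).mpr ha1, zero_padd] at e2
  rw [← Option.some_inj.mp e1, ← Option.some_inj.mp e2]

theorem inC_of_mackey {p q : E} (hp : p ∈ CB.P) (h : EA.Mackey p q) : inC EA CB q p := by
  obtain ⟨a1, b1, c, d0, e, h1, h2, h3, h4⟩ := h
  obtain ⟨q', hq', hae⟩ := EA.assoc a1 b1 c d0 e h1 h2
  have hqq : q' = q := by rw [h4] at hq'; exact (Option.some_inj.mp hq').symm
  rw [hqq] at hae
  obtain ⟨ac, hac, hpb1⟩ := assoc' (by rw [EA.comm]; exact h4) hae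
  have hacp : ac = p := by rw [h3] at hac; exact (Option.some_inj.mp hac).symm
  rw [hacp] at hpb1
  have hb1 : EA.le b1 (EA.compl p) := padd_defined_iff.mp ⟨e, hpb1⟩
  have hcp : EA.le c p := le_of_padd_right h3
  have e1 := J_add hp h4
  rw [J_fix hp hcp, (J_zero_iff hp).mpr hb1, zero_padd] at e1
  have e2 := J_add (memP_compl hp) h4
  rw [J_fix (memP_compl hp) hb1, J_kill hp hcp, padd_zero] at e2
  unfold inC
  rw [← Option.some_inj.mp e1, ← Option.some_inj.mp e2]
  rw [EA.comm]
  exact h4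

theorem JJ {p q : E} (hp : p ∈ CB.P) (hq : q ∈ CB.P) (h : EA.Mackey p q) :
    CB.J p q ∈ CB.P ∧ ∀ x, CB.J p (CB.J q x) = CB.J (CB.J p q) x := by
  obtain ⟨r, hr, hfun⟩ := CB.mackey p hp q hq h
  have h1 : CB.J p q = r := by
    have := congrFun hfun EA.one
    simp only [Function.comp_apply] at this
    rwa [CB.focus q hq, CB.focus r hr] at this
  constructor
  · rw [h1]; exact hr
  · intro x
    have := congrFun hfun x
    simp only [Function.comp_apply] at this
    rw [this, h1]

theorem JJ_comm {p q : E} (hp : p ∈ CB.P) (hq : q ∈ CB.P) (h : EA.Mackey p q) (x : E) :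
    CB.J p (CB.J q x) = CB.J q (CB.J p x) := by
  rw [(JJ hp hq h).2 x, (JJ hq hp (mackey_symm h)).2 x, J_meet hp hq h]

end Compr

section Blocks

variable {CB : CompressionBase EA}

theorem boolean_pairwise {B : Set E} (hB : BooleanSub EA CB B) {z w : E}
    (hz : z ∈ B) (hw : w ∈ B) : EA.Mackey z w := by
  obtain ⟨p1, _, q1, _, c, _, d, e, h1, h2, h3, h4⟩ := hB.2.2 z hz w hw
  exact ⟨p1, q1, c, d, e, h1, h2, h3, h4⟩

theorem bel_inC_self {a : E} {B : Set E} (hB : IsBElementWith EA CB a B) {z : E} (hz : z ∈ B) :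
    inC EA CB a z :=
  (hB.2 z (hB.1.1 hz)).mpr (fun w hw => inC_of_mackey (hB.1.1 hz) (boolean_pairwise hB.1 hz hw))

theorem bel_inC_of_PC {a : E} {B : Set E} (hB : IsBElementWith EA CB a B) {z r : E}
    (hz : z ∈ B) (hr : r ∈ CB.P) (har : inC EA CB a r) : inC EA CB z r :=
  (hB.2 r hr).mp har z hz

theorem bel_mem_bicomm {a : E} {B : Set E} (hB : IsBElementWith EA CB a B) {z : E}
    (hz : z ∈ B) : z ∈ bicomm EA CB a :=
  ⟨⟨hB.1.1 hz, bel_inC_self hB hz⟩, fun q hq => bel_inC_of_PC hB hz hq.1 hq.2⟩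

theorem block_exists {S : Set E} (hS : S ⊆ CB.P)
    (hpair : ∀ p ∈ S, ∀ q ∈ S, EA.Mackey p q) :
    ∃ B, IsBlock EA CB B ∧ S ⊆ B := by
  have hz := zorn_subset_nonempty {T : Set E | T ⊆ CB.P ∧ ∀ p ∈ T, ∀ q ∈ T, EA.Mackey p q}
    (fun c hc hchain _ => ⟨⋃₀ c, ⟨fun x hx => by
        obtain ⟨t, ht, hxt⟩ := hx; exact (hc ht).1 hxt,
      by
        rintro p ⟨t, ht, hpt⟩ q ⟨u, hu, hqu⟩
        rcases hchain.total ht hu with h | h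
        · exact (hc hu).2 p (h hpt) q hqu
        · exact (hc ht).2 p hpt q (h hqu)⟩,
      fun s hs => Set.subset_sUnion_of_mem hs⟩) S ⟨hS, hpair⟩
  obtain ⟨M, hSM, hM⟩ := hz
  refine ⟨M, ⟨hM.1.1, hM.1.2, ?_⟩, hSM⟩
  intro B' hB'P hB'pair hMB'
  exact Set.Subset.antisymm (hM.2 ⟨hB'P, hB'pair⟩ hMB') hMB'

theorem mem_block_of_compat {B : Set E} (hB : IsBlock EA CB B) {t : E} (ht : t ∈ CB.P)
    (hcompat : ∀ u ∈ B, EA.Mackey t u) : t ∈ B := by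
  have h := hB.2.2 (B ∪ {t}) ?_ ?_ Set.subset_union_left
  · rw [← h]; exact Or.inr rfl
  · rintro x (hx | rfl)
    · exact hB.1 hx
    · exact ht
  · rintro p (hp | rfl) q (hq | rfl)
    · exact hB.2.1 p hp q hq
    · exact mackey_symm (hcompat p hp)
    · exact hcompat q hq
    · exact mackey_refl _

theorem commuteEl_of_block {B : Set E} (hB : IsBlock EA CB B) {e f : E}
    (he : ∀ t ∈ B, inC EA CB e t) (hf : ∀ t ∈ B, inC EA CB f t) :
    CommuteEl EA CB e f := by
  intro p hp q hq
  have hpB : p ∈ B := mem_block_of_compat hB hp.1.1 (fun u hu =>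
    mackey_symm (mackey_of_inC (hB.1 hu) (hp.2 u ⟨hB.1 hu, he u hu⟩)))
  have hqB : q ∈ B := mem_block_of_compat hB hq.1.1 (fun u hu =>
    mackey_symm (mackey_of_inC (hB.1 hu) (hq.2 u ⟨hB.1 hu, hf u hu⟩)))
  exact hB.2.1 p hpB q hqB

theorem commonBlock {d s : E} (hb : BProperty EA CB) (hs : s ∈ CB.P) (hd : inC EA CB d s) :
    ∃ B, IsBlock EA CB B ∧ s ∈ B ∧ EA.compl s ∈ B ∧ (∀ t ∈ B, inC EA CB d t) := by
  obtain ⟨Bd, hBd⟩ := hb d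
  have hds' : inC EA CB d (EA.compl s) := inC_compl_iff.mpr hd
  have hSP : Bd ∪ {s, EA.compl s} ⊆ CB.P := by
    rintro x (hx | rfl | rfl)
    · exact hBd.1.1 hx
    · exact hs
    · exact memP_compl hs
  have hpair : ∀ p ∈ Bd ∪ {s, EA.compl s}, ∀ q ∈ Bd ∪ {s, EA.compl s}, EA.Mackey p q := by
    rintro p (hp | rfl | rfl) q (hq | rfl | rfl)
    · exact boolean_pairwise hBd.1 hp hq
    · exact mackey_symm (mackey_of_inC hs (bel_inC_of_PC hBd hp hs hd))
    · exact mackey_symm (mackey_of_inC (memP_compl hs) (bel_inC_of_PC hBd hp (memP_compl hs) hds'))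
    · exact mackey_of_inC hs (bel_inC_of_PC hBd hq hs hd)
    · exact mackey_refl _
    · exact mackey_of_inC hs (inC_of_le_compl hs (le_refl' EA _))
    · exact mackey_of_inC (memP_compl hs) (bel_inC_of_PC hBd hq (memP_compl hs) hds')
    · exact mackey_symm (mackey_of_inC hs (inC_of_le_compl hs (le_refl' EA _)))
    · exact mackey_refl _
  obtain ⟨B, hB, hSB⟩ := block_exists hSP hpair
  refine ⟨B, hB, hSB (Or.inr (Or.inl rfl)), hSB (Or.inr (Or.inr rfl)), ?_⟩
  intro t htB
  exact (hBd.2 t (hB.1 htB)).mpr (fun z hz =>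
    inC_of_mackey (hB.1 htB) (hB.2.1 t htB z (hSB (Or.inl hz))))

theorem mem_PCset_pair {e f s : E} (hs : s ∈ CB.P) (he : inC EA CB e s)
    (hf : inC EA CB f s) : s ∈ PCset EA CB {e, f} :=
  ⟨hs, fun x hx => by rcases hx with rfl | rfl; exacts [he, hf]⟩

theorem Ple_inC {e f q : E} (hq : q ∈ Ple EA CB e f) :
    q ∈ CB.P ∧ inC EA CB e q ∧ inC EA CB f q :=
  ⟨hq.1.1, hq.1.2 e (Or.inr (Or.inl rfl)), hq.1.2 f (Or.inr (Or.inr rfl))⟩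

theorem Ple_inC_PC {e f q s : E} (hq : q ∈ Ple EA CB e f)
    (hs : s ∈ PCset EA CB {e, f}) : inC EA CB s q :=
  hq.1.2 s (Or.inl hs)

end Blocks

section Main

variable {CB : CompressionBase EA}

theorem sandwich {A A2 B Pa Pb ee : E} (hee : EA.padd A ee = some B)
    (ha : EA.padd A A2 = some Pa) (hb : EA.padd B A2 = some Pb) :
    EA.padd Pa ee = some Pb := by
  obtain ⟨f, hf, hAf⟩ := EA.assoc A ee A2 B Pb hee hb
  obtain ⟨g, hg, hge⟩ := assoc' (by rw [EA.comm]; exact hf) hAf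
  have : g = Pa := by rw [ha] at hg; exact (Option.some_inj.mp hg).symm
  rwa [this] at hge

theorem keyLemma {a b p r : E} (hp : p ∈ CB.P) (hr : r ∈ CB.P)
    (hap : inC EA CB a p) (hbp : inC EA CB b p)
    (har : inC EA CB a r) (hbr : inC EA CB b r) (hrp : inC EA CB r p)
    (h1 : EA.le (CB.J p a) (CB.J p b))
    (h2 : EA.le (CB.J (EA.compl p) b) (CB.J (EA.compl p) a))
    (h3 : EA.le (CB.J r a) (CB.J r b))
    (h4 : EA.le (CB.J (EA.compl r) b) (CB.J (EA.compl r) a)) :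
    EA.osub (CB.J p b) (CB.J p a) = EA.osub (CB.J r b) (CB.J r a) := by
  have mpr : EA.Mackey p r := mackey_of_inC hp hrp
  have mpr' : EA.Mackey p (EA.compl r) := mackey_of_inC hp (inC_compl_elem hp hrp)
  have mp'r : EA.Mackey (EA.compl p) r := mackey_of_inC (memP_compl hp) (inC_compl_iff.mpr hrp)
  have hc := JJ hp hr mpr
  have hc2 := JJ hp (memP_compl hr) mpr'
  have hcr := JJ hr hp (mackey_symm mpr)
  have hmeet : CB.J p r = CB.J r p := J_meet hp hr mpr
  have hmeet2 : CB.J p (EA.compl r) = CB.J (EA.compl r) p := J_meet hp (memP_compl hr) mpr'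
  have hc2r := JJ (memP_compl hr) hp (mackey_symm mpr')
  have splita : EA.padd (CB.J (CB.J p r) a) (CB.J (CB.J p (EA.compl r)) a)
      = some (CB.J p a) := by
    have := J_add hp har
    rwa [hc.2 a, hc2.2 a] at this
  have splitb : EA.padd (CB.J (CB.J p r) b) (CB.J (CB.J p (EA.compl r)) b)
      = some (CB.J p b) := by
    have := J_add hp hbr
    rwa [hc.2 b, hc2.2 b] at this
  have e1 : EA.le (CB.J (CB.J p (EA.compl r)) a) (CB.J (CB.J p (EA.compl r)) b) := by
    have := J_mono (memP_compl hr) h1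
    rwa [hc2r.2 a, hc2r.2 b, ← hmeet2] at this
  have e2 : EA.le (CB.J (CB.J p (EA.compl r)) b) (CB.J (CB.J p (EA.compl r)) a) := by
    have := J_mono hp h4
    rwa [hc2.2 b, hc2.2 a] at this
  have hc2ab : CB.J (CB.J p (EA.compl r)) a = CB.J (CB.J p (EA.compl r)) b :=
    le_antisymm' e1 e2
  have hca : EA.le (CB.J (CB.J p r) a) (CB.J (CB.J p r) b) := by
    have := J_mono hr h1
    rwa [hcr.2 a, hcr.2 b, ← hmeet] at this
  have hee : EA.padd (CB.J (CB.J p r) a) (EA.osub (CB.J (CB.J p r) b) (CB.J (CB.J p r) a))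
      = some (CB.J (CB.J p r) b) := osub_spec hca
  have splitb' : EA.padd (CB.J (CB.J p r) b) (CB.J (CB.J p (EA.compl r)) a)
      = some (CB.J p b) := by rw [hc2ab]; exact splitb
  have main_p := sandwich hee splita splitb'
  -- symmetric side
  have hpr : inC EA CB p r := inC_of_mackey hr (mackey_symm mpr)
  have mrp' : EA.Mackey r (EA.compl p) := mackey_of_inC hr (inC_compl_elem hr hpr)
  have hc2'' := JJ hr (memP_compl hp) mrp'
  have hmeet3 : CB.J r (EA.compl p) = CB.J (EA.compl p) r := J_meet hr (memP_compl hp) mrp'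
  have hc2p' := JJ (memP_compl hp) hr mp'r
  have splita_r : EA.padd (CB.J (CB.J p r) a) (CB.J (CB.J r (EA.compl p)) a)
      = some (CB.J r a) := by
    have := J_add hr hap
    rwa [hcr.2 a, ← hmeet, hc2''.2 a] at this
  have splitb_r : EA.padd (CB.J (CB.J p r) b) (CB.J (CB.J r (EA.compl p)) b)
      = some (CB.J r b) := by
    have := J_add hr hbp
    rwa [hcr.2 b, ← hmeet, hc2''.2 b] at this
  have ec1 : EA.le (CB.J (CB.J r (EA.compl p)) a) (CB.J (CB.J r (EA.compl p)) b) := by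
    have := J_mono (memP_compl hp) h3
    rwa [hc2p'.2 a, hc2p'.2 b, ← hmeet3] at this
  have ec2 : EA.le (CB.J (CB.J r (EA.compl p)) b) (CB.J (CB.J r (EA.compl p)) a) := by
    have := J_mono hr h2
    rwa [hc2''.2 b, hc2''.2 a] at this
  have hc2rab : CB.J (CB.J r (EA.compl p)) a = CB.J (CB.J r (EA.compl p)) b :=
    le_antisymm' ec1 ec2
  have splitb_r' : EA.padd (CB.J (CB.J p r) b) (CB.J (CB.J r (EA.compl p)) a)
      = some (CB.J r b) := by rw [hc2rab]; exact splitb_r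
  have main_r := sandwich hee splita_r splitb_r'
  rw [osub_eq main_p, osub_eq main_r]

theorem posPart_eq {a b q : E} (h : (Ple EA CB a b).Nonempty) (hq : q ∈ Ple EA CB a b) :
    posPart EA CB a b = EA.osub (CB.J q b) (CB.J q a) := by
  have hs := h.some_mem
  rw [posPart, dif_pos h]
  obtain ⟨pP, hap, hbp⟩ := Ple_inC hs
  obtain ⟨qP, haq, hbq⟩ := Ple_inC hq
  exact keyLemma pP qP hap hbp haq hbq (Ple_inC_PC hs (mem_PCset_pair qP haq hbq))
    hs.2.1 hs.2.2 hq.2.1 hq.2.2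

theorem posPart_inC_aux {a b q s : E} (hq : q ∈ Ple EA CB a b) (hs : s ∈ PCset EA CB {a, b}) :
    inC EA CB (EA.osub (CB.J q b) (CB.J q a)) s := by
  obtain ⟨qP, haq, hbq⟩ := Ple_inC hq
  have sP := hs.1
  have has : inC EA CB a s := hs.2 a (Or.inl rfl)
  have hbs : inC EA CB b s := hs.2 b (Or.inr rfl)
  have msq : EA.Mackey q s := mackey_of_inC qP (Ple_inC_PC hq hs)
  have msq' : EA.Mackey q (EA.compl s) :=
    mackey_of_inC qP (inC_compl_elem qP (Ple_inC_PC hq hs))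
  have hde : EA.padd (CB.J q a) (EA.osub (CB.J q b) (CB.J q a)) = some (CB.J q b) :=
    osub_spec hq.2.1
  have hds := J_add sP hde
  have hds' := J_add (memP_compl sP) hde
  have hqa : EA.padd (CB.J s (CB.J q a)) (CB.J (EA.compl s) (CB.J q a))
      = some (CB.J q a) := by
    have := J_add qP has
    rwa [JJ_comm qP sP msq a, JJ_comm qP (memP_compl sP) msq' a] at this
  have hqb : EA.padd (CB.J s (CB.J q b)) (CB.J (EA.compl s) (CB.J q b))
      = some (CB.J q b) := by
    have := J_add qP hbs
    rwa [JJ_comm qP sP msq b, JJ_comm qP (memP_compl sP) msq' b] at this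
  obtain ⟨z, t, hz, ht, hzt⟩ := rearrange4 hds hds' hqb
  have hza : z = CB.J q a := by rw [hqa] at hz; exact (Option.some_inj.mp hz).symm
  rw [hza] at hzt
  have htd : t = EA.osub (CB.J q b) (CB.J q a) := cancel hzt hde
  rw [htd] at ht
  exact ht

theorem cover_lemma {d p s : E} (hbc : BComparability EA CB) (hs : s ∈ CB.P)
    (hd : inC EA CB d s) (hcov : IsProjCover EA CB d p) : inC EA CB s p := by
  obtain ⟨pP, hmin⟩ := hcov
  have hdp : EA.le d p := (hmin p pP).mpr (le_refl' EA p)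
  have hsum : EA.padd (CB.J s d) (CB.J (EA.compl s) d) = some d := hd
  set d1 := CB.J s d with hd1def
  set d2 := CB.J (EA.compl s) d with hd2def
  have hd1d : EA.le d1 d := le_of_padd_left hsum
  have hd2d : EA.le d2 d := le_of_padd_right hsum
  have hd1s : EA.le d1 s := J_le hs d
  have hd2s' : EA.le d2 (EA.compl s) := J_le (memP_compl hs) d
  obtain ⟨B, hB, hsB, hs'B, hdB⟩ := commonBlock hbc.1 hs hd
  have hd1B : ∀ u ∈ B, inC EA CB d1 u := by
    intro u huB
    have huP := hB.1 huB
    refine (inC_iff huP).mpr ?_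
    have hcm : CB.J u d1 = CB.J s (CB.J u d) := by
      rw [hd1def]; exact JJ_comm huP hs (hB.2.1 u huB s hsB) d
    rw [hcm]
    exact J_mono hs ((inC_iff huP).mp (hdB u huB))
  have hd2B : ∀ u ∈ B, inC EA CB d2 u := by
    intro u huB
    have huP := hB.1 huB
    refine (inC_iff huP).mpr ?_
    have hcm : CB.J u d2 = CB.J (EA.compl s) (CB.J u d) := by
      rw [hd2def]; exact JJ_comm huP (memP_compl hs) (hB.2.1 u huB (EA.compl s) hs'B) d
    rw [hcm]
    exact J_mono (memP_compl hs) ((inC_iff huP).mp (hdB u huB))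
  have hcomm : CommuteEl EA CB d1 d2 := commuteEl_of_block hB hd1B hd2B
  obtain ⟨q, hq⟩ := hbc.2 d1 d2 hcomm
  have qP : q ∈ CB.P := hq.1.1
  have hsPC : s ∈ PCset EA CB {d1, d2} :=
    mem_PCset_pair hs (inC_of_le hs hd1s) (inC_of_le_compl hs hd2s')
  have hpPC : p ∈ PCset EA CB {d1, d2} :=
    mem_PCset_pair pP (inC_of_le pP (le_trans' hd1d hdp)) (inC_of_le pP (le_trans' hd2d hdp))
  have mqs : EA.Mackey q s := mackey_of_inC qP (hq.1.2 s (Or.inl hsPC))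
  have mqp : EA.Mackey q p := mackey_of_inC qP (hq.1.2 p (Or.inl hpPC))
  have h01 : CB.J q d1 = EA.zero := by
    have hmono := J_mono hs hq.2.1
    rw [JJ_comm hs qP (mackey_symm mqs) d1, JJ_comm hs qP (mackey_symm mqs) d2,
      J_fix hs hd1s, (J_zero_iff hs).mpr hd2s', J_zero qP] at hmono
    exact eq_zero_of_le_zero hmono
  have hd1q' : EA.le d1 (EA.compl q) := (J_zero_iff qP).mp h01
  have ms'q' : EA.Mackey (EA.compl s) (EA.compl q) := by
    have : inC EA CB (EA.compl s) (EA.compl q) :=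
      inC_compl_iff.mpr (inC_compl_elem qP (inC_of_mackey qP mqs))
    exact mackey_symm (mackey_of_inC (memP_compl qP) this)
  have h02 : CB.J (EA.compl q) d2 = EA.zero := by
    have hmono := J_mono (memP_compl hs) hq.2.2
    rw [JJ_comm (memP_compl hs) (memP_compl qP) ms'q' d2,
      JJ_comm (memP_compl hs) (memP_compl qP) ms'q' d1,
      J_fix (memP_compl hs) hd2s',
      (J_zero_iff (memP_compl hs)).mpr (by rw [compl_compl']; exact hd1s),
      J_zero (memP_compl qP)] at hmono
    exact eq_zero_of_le_zero hmono
  have hd2q : EA.le d2 q := by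
    have := (J_zero_iff (memP_compl qP)).mp h02
    rwa [compl_compl'] at this
  have mq'p : EA.Mackey (EA.compl q) p :=
    mackey_of_inC (memP_compl qP) (inC_compl_iff.mpr (inC_of_mackey qP mqp))
  have mq's : EA.Mackey (EA.compl q) s :=
    mackey_of_inC (memP_compl qP) (inC_compl_iff.mpr (inC_of_mackey qP mqs))
  have m1P : CB.J (EA.compl q) p ∈ CB.P := (JJ (memP_compl qP) pP mq'p).1
  have τP : CB.J (EA.compl q) s ∈ CB.P := (JJ (memP_compl qP) hs mq's).1
  have hd1τ : EA.le d1 (CB.J (EA.compl q) s) := by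
    have := J_mono (memP_compl qP) hd1s
    rwa [J_fix (memP_compl qP) hd1q'] at this
  have hττ' : EA.le (CB.J (EA.compl q) s) (EA.compl q) := J_le (memP_compl qP) s
  obtain ⟨R, hR0⟩ := padd_defined_iff.mpr hττ'
  have hR : EA.padd (CB.J (EA.compl q) s) q = some R := by rw [EA.comm]; exact hR0
  have RP : R ∈ CB.P := memP_padd τP qP hR
  have hdR : EA.le d R := by
    obtain ⟨w, hw, hwle⟩ := padd_le_padd hd1τ hd2q hR
    have : w = d := by rw [hsum] at hw; exact (Option.some_inj.mp hw).symm
    rwa [this] at hwle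
  have hpR : EA.le p R := (hmin R RP).mp hdR
  have hm1τ : EA.le (CB.J (EA.compl q) p) (CB.J (EA.compl q) s) := by
    have h5 := J_mono (memP_compl qP) hpR
    have h6 : CB.J (EA.compl q) R = CB.J (EA.compl q) s := by
      have hJq'q : CB.J (EA.compl q) q = EA.zero :=
        (J_zero_iff (memP_compl qP)).mpr (by rw [compl_compl']; exact le_refl' EA q)
      have := J_add (memP_compl qP) hR
      rw [J_fix (memP_compl qP) hττ', hJq'q, padd_zero] at this
      exact (Option.some_inj.mp this).symm
    rwa [h6] at h5
  have σP : CB.J q s ∈ CB.P := (JJ qP hs mqs).1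
  have hJqd : CB.J q d = d2 := by
    have := J_add qP hsum
    rw [h01, J_fix qP hd2q, zero_padd] at this
    exact (Option.some_inj.mp this).symm
  have hJσd : CB.J (CB.J q s) d = EA.zero := by
    have h7 := (JJ hs qP (mackey_symm mqs)).2 d
    rw [hJqd, ← J_meet qP hs mqs] at h7
    rw [← h7, (J_zero_iff hs).mpr hd2s']
  have hdσ' : EA.le d (EA.compl (CB.J q s)) := (J_zero_iff σP).mp hJσd
  have hpσ' : EA.le p (EA.compl (CB.J q s)) := (hmin _ (memP_compl σP)).mp hdσ'
  have hJpσ : CB.J p (CB.J q s) = EA.zero := (J_zero_iff pP).mpr (le_compl_swap hpσ')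
  have hJpτ : CB.J p (CB.J (EA.compl q) s) = CB.J (EA.compl q) p := by
    have hfixτ : CB.J (EA.compl q) (CB.J (EA.compl q) s) = CB.J (EA.compl q) s :=
      J_idem (memP_compl qP)
    have h8 := (JJ pP (memP_compl qP) (mackey_symm mq'p)).2 (CB.J (EA.compl q) s)
    rw [hfixτ, ← J_meet (memP_compl qP) pP mq'p] at h8
    have h9 : CB.J (CB.J (EA.compl q) p) (CB.J (EA.compl q) s) = CB.J (EA.compl q) p := by
      have h10 := osub_spec hm1τ
      have h11 := J_add m1P h10
      rw [J_fix m1P (le_refl' EA _),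
        (J_zero_iff m1P).mpr (padd_defined_iff.mp ⟨_, h10⟩), padd_zero] at h11
      exact (Option.some_inj.mp h11).symm
    rw [h8, h9]
  have hστ : EA.padd (CB.J q s) (CB.J (EA.compl q) s) = some s := inC_of_mackey qP mqs
  have hfin := J_add pP hστ
  rw [hJpσ, hJpτ, zero_padd] at hfin
  refine (inC_iff pP).mpr ?_
  have h12 : CB.J p s = CB.J (EA.compl q) p := (Option.some_inj.mp hfin).symm
  rw [h12]
  exact le_trans' hm1τ (le_of_padd_right hστ)

end Main

end Infra

end EffectAlgebra
open EffectAlgebra in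
/-- in an effect algebra with b-comparability, for `a C b`:
(i) `(b−a)_+` lies in every C-block containing `a` and `b`;
(ii) for `q ∈ P_≤(a,b)`, `(a−b)_+ = J_{q'}(a) ⊖ J_{q'}(b)`;
(iii) if `r ∈ PC(a) ∩ PC(b)` with `J_r(a) ≤ J_r(b)` and `J_{r'}(b) ≤ J_{r'}(a)`,
then `J_r(b) ⊖ J_r(a) = (b−a)_+`;
(iv) if `(b−a)_+°` exists then it belongs to `P_≤(a,b)` and is the smallest such `r`. -/
theorem statement8 {E : Type u} (EA : EffectAlgebra E) (CB : CompressionBase EA)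
    (hbc : BComparability EA CB) (a b : E) (hab : CommuteEl EA CB a b) :
    (∀ B : Set E, IsBlock EA CB B → a ∈ Cblock EA CB B → b ∈ Cblock EA CB B →
      posPart EA CB a b ∈ Cblock EA CB B) ∧
    (∀ q ∈ Ple EA CB a b,
      posPart EA CB b a = EA.osub (CB.J (EA.compl q) a) (CB.J (EA.compl q) b)) ∧
    (∀ r : E, r ∈ PC EA CB a → r ∈ PC EA CB b →
      EA.le (CB.J r a) (CB.J r b) →
      EA.le (CB.J (EA.compl r) b) (CB.J (EA.compl r) a) →
      EA.osub (CB.J r b) (CB.J r a) = posPart EA CB a b) ∧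
    (∀ p : E, IsProjCover EA CB (posPart EA CB a b) p →
      p ∈ Ple EA CB a b ∧
      (p ∈ PC EA CB a ∧ p ∈ PC EA CB b ∧
        EA.le (CB.J p a) (CB.J p b) ∧
        EA.le (CB.J (EA.compl p) b) (CB.J (EA.compl p) a)) ∧
      ∀ r : E, r ∈ PC EA CB a → r ∈ PC EA CB b →
        EA.le (CB.J r a) (CB.J r b) →
        EA.le (CB.J (EA.compl r) b) (CB.J (EA.compl r) a) →
        EA.le p r) := by
  have hEx : (Ple EA CB a b).Nonempty := hbc.2 a b hab
  set q0 := hEx.some with hq0def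
  have hq0m : q0 ∈ Ple EA CB a b := hEx.some_mem
  have hpp : posPart EA CB a b = EA.osub (CB.J q0 b) (CB.J q0 a) := posPart_eq hEx hq0m
  obtain ⟨q0P, haq0, hbq0⟩ := Ple_inC hq0m
  -- part (iii) as a reusable fact
  have hiii : ∀ r : E, r ∈ PC EA CB a → r ∈ PC EA CB b →
      EA.le (CB.J r a) (CB.J r b) →
      EA.le (CB.J (EA.compl r) b) (CB.J (EA.compl r) a) →
      EA.osub (CB.J r b) (CB.J r a) = posPart EA CB a b := by
    intro r hra hrb h1 h2
    have hrPC : r ∈ PCset EA CB {a, b} := mem_PCset_pair hra.1 hra.2 hrb.2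
    rw [hpp]
    exact (keyLemma q0P hra.1 haq0 hbq0 hra.2 hrb.2 (Ple_inC_PC hq0m hrPC)
      hq0m.2.1 hq0m.2.2 h1 h2).symm
  refine ⟨?_, ?_, hiii, ?_⟩
  · -- (i)
    intro B hB haB hbB t htB
    rw [hpp]
    exact posPart_inC_aux hq0m (mem_PCset_pair (hB.1 htB) (haB t htB) (hbB t htB))
  · -- (ii)
    intro q hq
    have hq'm : EA.compl q ∈ Ple EA CB b a := by
      refine ⟨⟨memP_compl (Ple_inC hq).1, ?_⟩, hq.2.2, ?_⟩
      · rintro x (hx | rfl | rfl)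
        · have hx' : x ∈ PCset EA CB {a, b} :=
            mem_PCset_pair hx.1 (hx.2 a (Or.inr rfl)) (hx.2 b (Or.inl rfl))
          exact inC_compl_iff.mpr (Ple_inC_PC hq hx')
        · exact inC_compl_iff.mpr (Ple_inC hq).2.2
        · exact inC_compl_iff.mpr (Ple_inC hq).2.1
      · rw [compl_compl']; exact hq.2.1
    have hEx' : (Ple EA CB b a).Nonempty := ⟨_, hq'm⟩
    exact posPart_eq hEx' hq'm
  · -- (iv)
    intro p hcov
    have pP := hcov.1
    have hmin := hcov.2
    have hde : EA.padd (CB.J q0 a) (posPart EA CB a b) = some (CB.J q0 b) := by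
      rw [hpp]; exact osub_spec hq0m.2.1
    have hdq0 : EA.le (posPart EA CB a b) q0 :=
      le_trans' (le_of_padd_right hde) (J_le q0P b)
    have hdp : EA.le (posPart EA CB a b) p := (hmin p pP).mpr (le_refl' EA p)
    have hpq0 : EA.le p q0 := (hmin q0 q0P).mp hdq0
    have hkey : ∀ s ∈ PCset EA CB {a, b}, inC EA CB s p := by
      intro s hsPC
      have hds : inC EA CB (posPart EA CB a b) s := by
        rw [hpp]; exact posPart_inC_aux hq0m hsPC
      exact cover_lemma hbc hsPC.1 hds hcov
    obtain ⟨Ba, hBa⟩ := hbc.1 a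
    obtain ⟨Bb, hBb⟩ := hbc.1 b
    have hBaPC : ∀ z ∈ Ba, z ∈ PCset EA CB {a, b} := by
      intro z hz
      refine mem_PCset_pair (hBa.1.1 hz) (bel_inC_self hBa hz) ?_
      refine (hBb.2 z (hBa.1.1 hz)).mpr ?_
      intro w hw
      exact inC_of_mackey (hBa.1.1 hz) (hab z (bel_mem_bicomm hBa hz) w (bel_mem_bicomm hBb hw))
    have hBbPC : ∀ w ∈ Bb, w ∈ PCset EA CB {a, b} := by
      intro w hw
      refine mem_PCset_pair (hBb.1.1 hw) ?_ (bel_inC_self hBb hw)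
      refine (hBa.2 w (hBb.1.1 hw)).mpr ?_
      intro z hz
      exact inC_of_mackey (hBb.1.1 hw)
        (mackey_symm (hab z (bel_mem_bicomm hBa hz) w (bel_mem_bicomm hBb hw)))
    have hap : inC EA CB a p := (hBa.2 p pP).mpr (fun z hz => hkey z (hBaPC z hz))
    have hbp : inC EA CB b p := (hBb.2 p pP).mpr (fun w hw => hkey w (hBbPC w hw))
    -- inequalities
    have mpq0 : EA.Mackey p q0 := mackey_of_le hpq0
    have hJpq0 : ∀ x, CB.J p (CB.J q0 x) = CB.J p x := by
      intro x
      have h5 := (JJ pP q0P mpq0).2 x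
      have h6 : CB.J p q0 = p := by
        have h7 := osub_spec hpq0
        have := J_add pP h7
        rw [J_fix pP (le_refl' EA p),
          (J_zero_iff pP).mpr (padd_defined_iff.mp ⟨q0, h7⟩), padd_zero] at this
        exact (Option.some_inj.mp this).symm
      rwa [h6] at h5
    have hmain : EA.padd (CB.J p a) (posPart EA CB a b) = some (CB.J p b) := by
      have := J_add pP hde
      rwa [hJpq0 a, hJpq0 b, J_fix pP hdp] at this
    have hineq1 : EA.le (CB.J p a) (CB.J p b) := le_of_padd_left hmain
    have hts : EA.padd p (EA.osub q0 p) = some q0 := osub_spec hpq0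
    have htP : EA.osub q0 p ∈ CB.P := by
      have hq0c : EA.le (EA.compl q0) (EA.compl p) := compl_le_compl hpq0
      obtain ⟨u, hu⟩ := padd_defined_iff.mpr hq0c
      have uP : u ∈ CB.P := memP_padd pP (memP_compl q0P) hu
      obtain ⟨v, hv, hpv⟩ := EA.assoc p (EA.osub q0 p) (EA.compl q0) q0 EA.one hts
        (padd_compl' EA q0)
      obtain ⟨w, hw, hwt⟩ := assoc' (by rw [EA.comm]; exact hv) hpv
      have hwu : w = u := by rw [hu] at hw; exact (Option.some_inj.mp hw).symm
      rw [hwu] at hwt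
      have hcu : EA.compl u = EA.osub q0 p := compl_eq hwt
      rw [← hcu]
      exact memP_compl uP
    have htq0 : EA.le (EA.osub q0 p) q0 := le_of_padd_right hts
    have htp' : EA.le (EA.osub q0 p) (EA.compl p) := padd_defined_iff.mp ⟨q0, hts⟩
    have hJtq0 : ∀ x, CB.J (EA.osub q0 p) (CB.J q0 x) = CB.J (EA.osub q0 p) x := by
      intro x
      have h5 := (JJ htP q0P (mackey_of_le htq0)).2 x
      have h6 : CB.J (EA.osub q0 p) q0 = EA.osub q0 p := by
        have := J_add htP (show EA.padd (EA.osub q0 p) p = some q0 by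
          rw [EA.comm]; exact hts)
        rw [J_fix htP (le_refl' EA _),
          (J_zero_iff htP).mpr (le_compl_swap htp'), padd_zero] at this
        exact (Option.some_inj.mp this).symm
      rwa [h6] at h5
    have hJtd : CB.J (EA.osub q0 p) (posPart EA CB a b) = EA.zero :=
      (J_zero_iff htP).mpr (le_trans' hdp (le_compl_swap htp'))
    have hJtab : CB.J (EA.osub q0 p) a = CB.J (EA.osub q0 p) b := by
      have := J_add htP hde
      rw [hJtq0 a, hJtq0 b, hJtd, padd_zero] at this
      exact Option.some_inj.mp this
    have hp'q0 : CB.J (EA.compl p) q0 = EA.osub q0 p := by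
      have := J_add (memP_compl pP) hts
      rw [J_kill pP (le_refl' EA p), J_fix (memP_compl pP) htp', zero_padd] at this
      exact (Option.some_inj.mp this).symm
    have hsplit : ∀ x, inC EA CB x q0 →
        EA.padd (CB.J (EA.osub q0 p) x) (CB.J (EA.compl q0) x)
          = some (CB.J (EA.compl p) x) := by
      intro x hx
      have h5 := J_add (memP_compl pP) hx
      have h6 := (JJ (memP_compl pP) q0P
        (mackey_of_inC (memP_compl pP) (inC_compl_iff.mpr (inC_of_mackey pP mpq0)))).2 x
      rw [h6, hp'q0] at h5
      have h7 : CB.J (EA.compl p) (CB.J (EA.compl q0) x) = CB.J (EA.compl q0) x :=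
        J_fix (memP_compl pP) (le_trans' (J_le (memP_compl q0P) x) (compl_le_compl hpq0))
      rwa [h7] at h5
    have hineq2 : EA.le (CB.J (EA.compl p) b) (CB.J (EA.compl p) a) := by
      have e1 := hsplit a haq0
      have e2 := hsplit b hbq0
      have hle1 : EA.le (CB.J (EA.osub q0 p) b) (CB.J (EA.osub q0 p) a) := by
        rw [hJtab]; exact le_refl' EA _
      obtain ⟨w, hw, hwle⟩ := padd_le_padd hle1 hq0m.2.2 e1
      have hwb : w = CB.J (EA.compl p) b := by
        rw [e2] at hw; exact (Option.some_inj.mp hw).symm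
      rwa [hwb] at hwle
    have hpPle : p ∈ Ple EA CB a b := by
      refine ⟨⟨pP, ?_⟩, hineq1, hineq2⟩
      rintro x (hx | rfl | rfl)
      · exact hkey x hx
      · exact hap
      · exact hbp
    refine ⟨hpPle, ⟨⟨pP, hap⟩, ⟨pP, hbp⟩, hineq1, hineq2⟩, ?_⟩
    intro r hra hrb hr1 hr2
    have heq : EA.osub (CB.J r b) (CB.J r a) = posPart EA CB a b := hiii r hra hrb hr1 hr2
    have hdr : EA.le (posPart EA CB a b) r := by
      rw [← heq]
      exact le_trans' (le_of_padd_right (osub_spec hr1)) (J_le hra.1 b)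
    exact (hmin r hra.1).mp hdr
end

section
/- Let E be an effect algebra that is spectral with respect to a compression base (J_p)_{p∈P} (so that necessarily P = E_S, the set of sharp elements), and let (J̄_p)_{p∈P} be any other compression base on E whose set of projections is also P = E_S. Then E is spectral with respect to (J̄_p)_{p∈P} as well. -/
/- Common definitions: effect algebras, compression bases, spectrality -/

attribute [local instance 0] Classical.propDecidable

universe u

namespace SpecAux

open EffectAlgebra

variable {E : Type u} (EA : EffectAlgebra E)

lemma compl_spec (a : E) : EA.padd a (EA.compl a) = some EA.one :=
  (EA.orth_exists a).choose_spec

lemma compl_eq {a x : E} (h : EA.padd a x = some EA.one) : EA.compl a = x :=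
  EA.orth_unique a _ x (compl_spec EA a) h

lemma assoc' {a b c bc abc : E} (h1 : EA.padd b c = some bc)
    (h2 : EA.padd a bc = some abc) :
    ∃ ab, EA.padd a b = some ab ∧ EA.padd ab c = some abc := by
  have h1' : EA.padd c b = some bc := (EA.comm c b).trans h1
  have h2' : EA.padd bc a = some abc := (EA.comm bc a).trans h2
  obtain ⟨y, hy1, hy2⟩ := EA.assoc c b a bc abc h1' h2'
  exact ⟨y, (EA.comm a b).trans hy1, (EA.comm y c).trans hy2⟩

lemma padd_one_zero : EA.padd EA.one EA.zero = some EA.one := by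
  obtain ⟨x, hx⟩ := EA.orth_exists EA.one
  have hx' : EA.padd x EA.one = some EA.one := (EA.comm x EA.one).trans hx
  have hx0 := EA.add_one x EA.one hx'
  rw [hx0] at hx
  exact hx

lemma padd_zero (a : E) : EA.padd a EA.zero = some a := by
  have h1 : EA.padd (EA.compl a) a = some EA.one := (EA.comm _ a).trans (compl_spec EA a)
  obtain ⟨y, hy1, hy2⟩ := EA.assoc (EA.compl a) a EA.zero EA.one EA.one h1 (padd_one_zero EA)
  have hay : a = y := EA.orth_unique (EA.compl a) a y h1 hy2
  rw [← hay] at hy1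
  exact hy1

lemma padd_zero' (a : E) : EA.padd EA.zero a = some a :=
  (EA.comm EA.zero a).trans (padd_zero EA a)

lemma cancel {a x y s : E} (hx : EA.padd a x = some s) (hy : EA.padd a y = some s) :
    x = y := by
  have hs := compl_spec EA s
  obtain ⟨u, hu1, hu2⟩ := EA.assoc a x (EA.compl s) s EA.one hx hs
  obtain ⟨t, ht1, ht2⟩ := assoc' EA ((EA.comm (EA.compl s) x).trans hu1) hu2
  obtain ⟨v, hv1, hv2⟩ := EA.assoc a y (EA.compl s) s EA.one hy hs
  obtain ⟨t2, ht1', ht2'⟩ := assoc' EA ((EA.comm (EA.compl s) y).trans hv1) hv2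
  have htt : t = t2 := Option.some.inj (ht1.symm.trans ht1')
  exact EA.orth_unique t x y ht2 (by rw [htt]; exact ht2')

lemma padd_self_zero {a x : E} (h : EA.padd a x = some a) : x = EA.zero :=
  cancel EA h (padd_zero EA a)

lemma eq_zero_of_padd_zero {c d : E} (h : EA.padd c d = some EA.zero) : c = EA.zero := by
  have h2 : EA.padd EA.zero EA.one = some EA.one := (EA.comm _ _).trans (padd_one_zero EA)
  obtain ⟨y, hy1, hy2⟩ := EA.assoc c d EA.one EA.zero EA.one h h2
  have hd := EA.add_one d y hy1
  rw [hd] at hy1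
  have hy : y = EA.one := (Option.some.inj ((padd_zero' EA EA.one).symm.trans hy1)).symm
  rw [hy] at hy2
  exact EA.add_one c EA.one hy2

lemma le_trans {a b c : E} (h1 : EA.le a b) (h2 : EA.le b c) : EA.le a c := by
  obtain ⟨x, hx⟩ := h1; obtain ⟨y, hy⟩ := h2
  obtain ⟨z, hz1, hz2⟩ := EA.assoc a x y b c hx hy
  exact ⟨z, hz2⟩

lemma le_antisymm {a b : E} (h1 : EA.le a b) (h2 : EA.le b a) : a = b := by
  obtain ⟨x, hx⟩ := h1; obtain ⟨y, hy⟩ := h2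
  obtain ⟨z, hz1, hz2⟩ := EA.assoc a x y b a hx hy
  have hz0 : z = EA.zero := padd_self_zero EA hz2
  rw [hz0] at hz1
  have hx0 : x = EA.zero := eq_zero_of_padd_zero EA hz1
  rw [hx0, padd_zero EA a] at hx
  exact Option.some.inj hx

lemma compl_compl (a : E) : EA.compl (EA.compl a) = a :=
  compl_eq EA ((EA.comm (EA.compl a) a).trans (compl_spec EA a))

lemma padd_of_le_compl {a b : E} (h : EA.le b (EA.compl a)) : ∃ c, EA.padd a b = some c := by
  obtain ⟨d, hd⟩ := h
  have h1 : EA.padd (EA.compl a) a = some EA.one := (EA.comm _ _).trans (compl_spec EA a)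
  obtain ⟨y, hy1, hy2⟩ := EA.assoc b d a (EA.compl a) EA.one hd h1
  obtain ⟨t, ht1, ht2⟩ := assoc' EA ((EA.comm a d).trans hy1) hy2
  exact ⟨t, (EA.comm a b).trans ht1⟩

lemma compl_le_compl {a b : E} (h : EA.le a b) : EA.le (EA.compl b) (EA.compl a) := by
  obtain ⟨c, hc⟩ := h
  obtain ⟨y, hy1, hy2⟩ := EA.assoc a c (EA.compl b) b EA.one hc (compl_spec EA b)
  have hy : EA.compl a = y := compl_eq EA hy2
  refine ⟨c, ?_⟩
  rw [hy]
  exact (EA.comm (EA.compl b) c).trans hy1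

variable (CB : CompressionBase EA)

lemma J_one {p : E} (hp : p ∈ CB.P) : CB.J p EA.one = p := CB.focus p hp

lemma J_fix {p a : E} (hp : p ∈ CB.P) (ha : EA.le a p) : CB.J p a = a :=
  (CB.compr p hp).1.2 a (by rw [J_one EA CB hp]; exact ha)

lemma J_ker {p a : E} (hp : p ∈ CB.P) (ha : EA.le a (EA.compl p)) : CB.J p a = EA.zero :=
  ((CB.compr p hp).2 a).mpr (by rw [J_one EA CB hp]; exact ha)

lemma J_add {p : E} (hp : p ∈ CB.P) {a b c : E} (h : EA.padd a b = some c) :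
    EA.padd (CB.J p a) (CB.J p b) = some (CB.J p c) := (CB.compr p hp).1.1 a b c h

lemma J_le {p : E} (hp : p ∈ CB.P) (a : E) : EA.le (CB.J p a) p := by
  have h := J_add EA CB hp (compl_spec EA a)
  rw [J_one EA CB hp] at h
  exact ⟨_, h⟩

lemma compl_mem {p : E} (hp : p ∈ CB.P) : EA.compl p ∈ CB.P := CB.sub.2.2.1 p hp

lemma decomp_J {p a b c : E} (hp : p ∈ CB.P) (hb : EA.le b p) (hc : EA.le c (EA.compl p))
    (h : EA.padd b c = some a) :
    CB.J p a = b ∧ CB.J (EA.compl p) a = c := by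
  constructor
  · have hadd := J_add EA CB hp h
    rw [J_fix EA CB hp hb, J_ker EA CB hp hc, padd_zero EA b] at hadd
    exact (Option.some.inj hadd).symm
  · have hp' := compl_mem EA CB hp
    have hadd := J_add EA CB hp' h
    have hb' : EA.le b (EA.compl (EA.compl p)) := by rw [compl_compl EA p]; exact hb
    rw [J_ker EA CB hp' hb', J_fix EA CB hp' hc, padd_zero' EA c] at hadd
    exact (Option.some.inj hadd).symm

lemma inC_transfer {CB CB' : CompressionBase EA} {p a : E}
    (hp : p ∈ CB.P) (hp' : p ∈ CB'.P) (h : inC EA CB a p) :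
    inC EA CB' a p ∧ CB'.J p a = CB.J p a ∧
      CB'.J (EA.compl p) a = CB.J (EA.compl p) a := by
  have hb : EA.le (CB.J p a) p := J_le EA CB hp a
  have hc : EA.le (CB.J (EA.compl p) a) (EA.compl p) := J_le EA CB (compl_mem EA CB hp) a
  obtain ⟨h1, h2⟩ := decomp_J EA CB' hp' hb hc h
  refine ⟨?_, h1, h2⟩
  show EA.padd (CB'.J p a) (CB'.J (EA.compl p) a) = some a
  rw [h1, h2]
  exact h

lemma inC_compl {p a : E} (hp : p ∈ CB.P) (h : inC EA CB a p) :
    inC EA CB (EA.compl a) p := by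
  have hinc : EA.padd (CB.J p a) (CB.J (EA.compl p) a) = some a := h
  have hb : EA.le (CB.J p a) p := J_le EA CB hp a
  have hc : EA.le (CB.J (EA.compl p) a) (EA.compl p) := J_le EA CB (compl_mem EA CB hp) a
  obtain ⟨d, hd⟩ := hb
  obtain ⟨e, he⟩ := hc
  obtain ⟨s, hs1, hs2⟩ := assoc' EA he (compl_spec EA p)
  obtain ⟨y, hy1, hy2⟩ := EA.assoc (CB.J p a) d (CB.J (EA.compl p) a) p s hd hs1
  obtain ⟨z, hz1, hz2⟩ := assoc' EA ((EA.comm (CB.J (EA.compl p) a) d).trans hy1) hy2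
  have hz : z = a := Option.some.inj (hz1.symm.trans hinc)
  rw [hz] at hz2
  obtain ⟨x, hx1, hx2⟩ := EA.assoc a d e s EA.one hz2 hs2
  have hxa : EA.compl a = x := compl_eq EA hx2
  have hdle : EA.le d p := ⟨_, (EA.comm d (CB.J p a)).trans hd⟩
  have hele : EA.le e (EA.compl p) := ⟨_, (EA.comm e (CB.J (EA.compl p) a)).trans he⟩
  obtain ⟨g1, g2⟩ := decomp_J EA CB hp hdle hele hx1
  show EA.padd (CB.J p (EA.compl a)) (CB.J (EA.compl p) (EA.compl a)) = some (EA.compl a)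
  rw [hxa, g1, g2]
  exact hx1

lemma mackey_of_inC {p q : E} (hp : p ∈ CB.P) (h : inC EA CB q p) : EA.Mackey p q := by
  have hcq : EA.padd (CB.J p q) (CB.J (EA.compl p) q) = some q := h
  have hcp : EA.le (CB.J p q) p := J_le EA CB hp q
  have hq1 : EA.le (CB.J (EA.compl p) q) (EA.compl p) := J_le EA CB (compl_mem EA CB hp) q
  obtain ⟨p1, hp1⟩ := hcp
  have hp1le : EA.le p1 p := ⟨_, (EA.comm p1 (CB.J p q)).trans hp1⟩
  have h1 : EA.le (CB.J (EA.compl p) q) (EA.compl p1) :=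
    le_trans EA hq1 (compl_le_compl EA hp1le)
  obtain ⟨d, hd⟩ := padd_of_le_compl EA h1
  obtain ⟨t, ht⟩ := padd_of_le_compl EA hq1
  have hp1c : EA.padd p1 (CB.J p q) = some p := (EA.comm p1 (CB.J p q)).trans hp1
  obtain ⟨y, hy1, hy2⟩ := EA.assoc p1 (CB.J p q) (CB.J (EA.compl p) q) p t hp1c ht
  have hyq : y = q := Option.some.inj (hy1.symm.trans hcq)
  obtain ⟨z, hz1, hz2⟩ :=
    assoc' EA ((EA.comm (CB.J (EA.compl p) q) (CB.J p q)).trans hy1) hy2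
  have hzd : z = d := Option.some.inj (hz1.symm.trans hd)
  rw [hzd] at hz2
  have hq1c : EA.padd (CB.J (EA.compl p) q) (CB.J p q) = some q :=
    ((EA.comm (CB.J (EA.compl p) q) (CB.J p q)).trans hy1).trans (by rw [hyq])
  exact ⟨p1, CB.J (EA.compl p) q, CB.J p q, d, t, hd, hz2, hp1c, hq1c⟩

lemma mem_sharp {p : E} (hp : p ∈ CB.P) : EA.IsSharp p := by
  intro x hx1 hx2
  have h1 : CB.J p x = x := J_fix EA CB hp hx1
  have h2 : CB.J p x = EA.zero := J_ker EA CB hp hx2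
  rw [h1] at h2
  exact h2

lemma sharp_mem (hspec : Spectral EA CB) {a : E} (ha : EA.IsSharp a) : a ∈ CB.P := by
  have hcomm : CommuteEl EA CB a (EA.compl a) := by
    intro p hpb q hqb
    have hpPC : p ∈ PC EA CB a := hpb.1
    have hpP : p ∈ CB.P := hpPC.1
    have hpPC' : p ∈ PC EA CB (EA.compl a) := ⟨hpP, inC_compl EA CB hpP hpPC.2⟩
    have hqp : inC EA CB q p := hqb.2 p hpPC'
    exact mackey_of_inC EA CB hpP hqp
  obtain ⟨p, hpPle⟩ := hspec.2.2 a (EA.compl a) hcomm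
  obtain ⟨hpPset, hle1, hle2⟩ := hpPle
  have hpP : p ∈ CB.P := hpPset.1
  have hinCa : inC EA CB a p :=
    hpPset.2 a (Set.mem_union_right _ (Set.mem_insert a _))
  have hinCa' : inC EA CB (EA.compl a) p :=
    hpPset.2 (EA.compl a) (Set.mem_union_right _ (Set.mem_insert_of_mem _ rfl))
  have hJa_le_a : EA.le (CB.J p a) a := ⟨_, hinCa⟩
  have hJa'_le : EA.le (CB.J p (EA.compl a)) (EA.compl a) := ⟨_, hinCa'⟩
  have hJa_le_a' : EA.le (CB.J p a) (EA.compl a) := le_trans EA hle1 hJa'_le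
  have hJa0 : CB.J p a = EA.zero := ha _ hJa_le_a hJa_le_a'
  have hJ'a : CB.J (EA.compl p) a = a := by
    have h := hinCa
    have h' : EA.padd EA.zero (CB.J (EA.compl p) a) = some a := by rw [← hJa0]; exact h
    exact Option.some.inj ((padd_zero' EA _).symm.trans h')
  have ha_le_p' : EA.le a (EA.compl p) := by
    rw [← hJ'a]
    exact J_le EA CB (compl_mem EA CB hpP) a
  have h5 : EA.le (CB.J (EA.compl p) (EA.compl a)) a := by
    have h := hle2
    rw [hJ'a] at h
    exact h
  have h6 : EA.le (CB.J (EA.compl p) (EA.compl a)) (EA.compl a) :=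
    ⟨_, (EA.comm (CB.J (EA.compl p) (EA.compl a)) (CB.J p (EA.compl a))).trans hinCa'⟩
  have hJ'a'0 : CB.J (EA.compl p) (EA.compl a) = EA.zero := ha _ h5 h6
  have hJa' : CB.J p (EA.compl a) = EA.compl a := by
    have h : EA.padd (CB.J p (EA.compl a)) EA.zero = some (EA.compl a) := by
      rw [← hJ'a'0]; exact hinCa'
    exact Option.some.inj ((padd_zero EA _).symm.trans h)
  have ha'_le_p : EA.le (EA.compl a) p := by
    rw [← hJa']
    exact J_le EA CB hpP (EA.compl a)
  have hp_le_a' : EA.le p (EA.compl a) := by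
    have h := compl_le_compl EA ha_le_p'
    rw [compl_compl EA p] at h
    exact h
  have hpa : p = EA.compl a := le_antisymm EA hp_le_a' ha'_le_p
  have hmem : EA.compl a ∈ CB.P := hpa ▸ hpP
  have hmem2 := compl_mem EA CB hmem
  rw [compl_compl EA a] at hmem2
  exact hmem2

end SpecAux

open EffectAlgebra in
/-- if `E` is spectral with respect to the compression base `CB`
(so that necessarily `CB.P = E_S`), and `CB'` is another compression base whose set of
projections is also the set `E_S` of sharp elements, then `E` is spectral with respect
to `CB'` as well. -/
theorem statement10 {E : Type u} (EA : EffectAlgebra E)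
    (CB CB' : CompressionBase EA)
    (hspec : Spectral EA CB)
    (hP : CB'.P = {a : E | EA.IsSharp a}) :
    Spectral EA CB' := by
  have hPs : CB.P = {a : E | EA.IsSharp a} := by
    ext x
    exact ⟨fun h => SpecAux.mem_sharp EA CB h, fun h => SpecAux.sharp_mem EA CB hspec h⟩
  have hPP : ∀ x : E, x ∈ CB.P ↔ x ∈ CB'.P := by
    intro x; rw [hPs, hP]
  have hinC : ∀ p ∈ CB.P, ∀ a, inC EA CB a p ↔ inC EA CB' a p := by
    intro p hp a
    constructor
    · exact fun h => (SpecAux.inC_transfer EA hp ((hPP p).mp hp) h).1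
    · exact fun h => (SpecAux.inC_transfer EA ((hPP p).mp hp) hp h).1
  have hJval : ∀ p ∈ CB.P, ∀ a, inC EA CB a p →
      CB'.J p a = CB.J p a ∧ CB'.J (EA.compl p) a = CB.J (EA.compl p) a := by
    intro p hp a h
    exact (SpecAux.inC_transfer EA hp ((hPP p).mp hp) h).2
  have hPCset : ∀ A : Set E, PCset EA CB A = PCset EA CB' A := by
    intro A; ext q
    constructor
    · rintro ⟨hq, hall⟩
      exact ⟨(hPP q).mp hq, fun a ha => (hinC q hq a).mp (hall a ha)⟩
    · rintro ⟨hq, hall⟩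
      have hq' := (hPP q).mpr hq
      exact ⟨hq', fun a ha => (hinC q hq' a).mpr (hall a ha)⟩
  have hPC : ∀ a, PC EA CB a = PC EA CB' a := by
    intro a; ext q
    constructor
    · rintro ⟨hq, h⟩
      exact ⟨(hPP q).mp hq, (hinC q hq a).mp h⟩
    · rintro ⟨hq, h⟩
      have hq' := (hPP q).mpr hq
      exact ⟨hq', (hinC q hq' a).mpr h⟩
  have hPset : ∀ Q : Set E, Pset EA CB Q = Pset EA CB' Q := by
    intro Q
    unfold EffectAlgebra.Pset
    rw [hPCset, hPCset]
  have hbicomm : ∀ a, bicomm EA CB a = bicomm EA CB' a := by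
    intro a; ext q
    have h1 := Set.ext_iff.mp (hPC a)
    constructor
    · rintro ⟨hq, hall⟩
      refine ⟨(h1 q).mp hq, fun r hr => ?_⟩
      have hrC : r ∈ PC EA CB a := (h1 r).mpr hr
      exact (hinC r hrC.1 q).mp (hall r hrC)
    · rintro ⟨hq, hall⟩
      have hqC : q ∈ PC EA CB a := (h1 q).mpr hq
      refine ⟨hqC, fun r hr => ?_⟩
      exact (hinC r hr.1 q).mpr (hall r ((h1 r).mp hr))
  constructor
  · -- projection cover property
    intro a
    obtain ⟨q, hqP, hiff⟩ := hspec.1 a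
    exact ⟨q, (hPP q).mp hqP, fun r hr => hiff r ((hPP r).mpr hr)⟩
  constructor
  · -- b-property
    intro a
    obtain ⟨B, ⟨hBsub, hBea, hBm⟩, hBiff⟩ := hspec.2.1 a
    refine ⟨B, ⟨fun x hx => (hPP x).mp (hBsub hx), hBea, hBm⟩, ?_⟩
    intro p hp
    have hpC : p ∈ CB.P := (hPP p).mpr hp
    constructor
    · intro h b hb
      exact (hinC p hpC b).mp ((hBiff p hpC).mp ((hinC p hpC a).mpr h) b hb)
    · intro h
      have hB : ∀ b ∈ B, inC EA CB b p := fun b hb => (hinC p hpC b).mpr (h b hb)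
      exact (hinC p hpC a).mp ((hBiff p hpC).mpr hB)
  · -- comparability
    intro e f hcomm'
    have hcomm : CommuteEl EA CB e f := fun p hpb q hqb =>
      hcomm' p (by rw [← hbicomm e]; exact hpb) q (by rw [← hbicomm f]; exact hqb)
    obtain ⟨p, hpPset, hle1, hle2⟩ := hspec.2.2 e f hcomm
    have hpP : p ∈ CB.P := hpPset.1
    have hinCe : inC EA CB e p :=
      hpPset.2 e (Set.mem_union_right _ (Set.mem_insert e _))
    have hinCf : inC EA CB f p :=
      hpPset.2 f (Set.mem_union_right _ (Set.mem_insert_of_mem _ rfl))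
    obtain ⟨he1, he2⟩ := hJval p hpP e hinCe
    obtain ⟨hf1, hf2⟩ := hJval p hpP f hinCf
    refine ⟨p, ?_, ?_, ?_⟩
    · rw [← hPset]
      exact hpPset
    · rw [he1, hf1]
      exact hle1
    · rw [hf2, he2]
      exact hle2
end
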